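/- Let A be an n×n singular strict contraction (i.e., ‖A‖ < 1 and det A = 0). Then the largest eigenvalue of Re((I−A)⁻¹) is at least 1; in particular ‖Re((I−A)⁻¹)‖ ≥ ‖(I+|A|)⁻¹‖ = 1. -/

import Mathlib

open Matrix
open scoped ComplexOrder

noncomputable def eigDesc {n : ℕ} {A : Matrix (Fin n) (Fin n) ℂ} (hA : A.IsHermitian)
    (j : Fin n) : ℝ :=
  (hA.eigenvalues ∘ Tuple.sort hA.eigenvalues) j.rev

noncomputable def singVal {n : ℕ} (A : Matrix (Fin n) (Fin n) ℂ) (j : Fin n) : ℝ :=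
  Real.sqrt (eigDesc ((Matrix.posSemidef_conjTranspose_mul_self A).isHermitian) j)

noncomputable def hermPart {n : ℕ} (X : Matrix (Fin n) (Fin n) ℂ) :
    Matrix (Fin n) (Fin n) ℂ :=
  (1/2 : ℂ) • (X + Xᴴ)

lemma hermPart_isHermitian {n : ℕ} (X : Matrix (Fin n) (Fin n) ℂ) :
    (hermPart X).IsHermitian := by
  unfold hermPart
  simp [Matrix.IsHermitian, Matrix.conjTranspose_smul, Matrix.conjTranspose_add, add_comm]

noncomputable def psdSqrt {n : ℕ} {A : Matrix (Fin n) (Fin n) ℂ} (hA : A.PosSemidef) :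
    Matrix (Fin n) (Fin n) ℂ :=
  (hA.1.eigenvectorUnitary : Matrix (Fin n) (Fin n) ℂ) *
    diagonal ((↑) ∘ (√·) ∘ hA.1.eigenvalues) *
    (star hA.1.eigenvectorUnitary : Matrix (Fin n) (Fin n) ℂ)

/-! A null vector `x` of `A` is fixed by `(1 - A)⁻¹`, which exists because `‖A‖ < 1`; hence the
Rayleigh quotient of `Re((1 - A)⁻¹)` at `x` is `1`, so its largest eigenvalue is at least `1`.
Likewise `|A|` is singular, so `(1 + |A|)⁻¹` fixes a vector of its kernel, while
`(1 + |A|)² ≥ 1` makes it a contraction: its norm is exactly `1`. Finally, the norm of a Hermitian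
matrix dominates its largest eigenvalue. -/

lemma Matrix.IsHermitian.smul_one_sub_posSemidef_iff {ι 𝕜 : Type*} [Fintype ι] [DecidableEq ι]
    [RCLike 𝕜] {M : Matrix ι ι 𝕜} (hM : M.IsHermitian) (c : ℝ) :
    ((c : 𝕜) • (1 : Matrix ι ι 𝕜) - M).PosSemidef ↔ ∀ i, hM.eigenvalues i ≤ c := by
  conv_lhs => rw [hM.spectral_theorem, ← map_one (Unitary.conjStarAlgAut 𝕜 _ hM.eigenvectorUnitary),
    ← map_smul, ← map_sub, Unitary.conjStarAlgAut_apply,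
    Unitary.isUnit_coe.posSemidef_star_right_conjugate_iff, smul_one_eq_diagonal, diagonal_sub,
    posSemidef_diagonal_iff]
  simp [sub_nonneg]

section eigDesc

variable {n : ℕ} {M : Matrix (Fin n) (Fin n) ℂ}

lemma exists_eigenvalues_eq_eigDesc (hM : M.IsHermitian) (j : Fin n) :
    ∃ i, eigDesc hM j = hM.eigenvalues i :=
  ⟨_, rfl⟩

lemma eigenvalues_le_eigDesc_zero (hn : 0 < n) (hM : M.IsHermitian) (i : Fin n) :
    hM.eigenvalues i ≤ eigDesc hM ⟨0, hn⟩ := by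
  have hi : (Tuple.sort hM.eigenvalues).symm i ≤ Fin.rev ⟨0, hn⟩ := by
    rw [Fin.le_def, Fin.val_rev]
    have := ((Tuple.sort hM.eigenvalues).symm i).isLt
    simp only
    omega
  simpa [eigDesc] using Tuple.monotone_sort hM.eigenvalues hi

lemma eigDesc_zero_le_iff (hn : 0 < n) (hM : M.IsHermitian) {c : ℝ} :
    eigDesc hM ⟨0, hn⟩ ≤ c ↔ ∀ i, hM.eigenvalues i ≤ c := by
  refine ⟨fun h i ↦ (eigenvalues_le_eigDesc_zero hn hM i).trans h, fun h ↦ ?_⟩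
  obtain ⟨i, hi⟩ := exists_eigenvalues_eq_eigDesc hM ⟨0, hn⟩
  exact hi ▸ h i

lemma eigDesc_zero_le_iff_posSemidef (hn : 0 < n) (hM : M.IsHermitian) {c : ℝ} :
    eigDesc hM ⟨0, hn⟩ ≤ c ↔ ((c : ℂ) • (1 : Matrix (Fin n) (Fin n) ℂ) - M).PosSemidef :=
  (eigDesc_zero_le_iff hn hM).trans (hM.smul_one_sub_posSemidef_iff c).symm

lemma re_dotProduct_mulVec_le_eigDesc_zero (hn : 0 < n) (hM : M.IsHermitian) (x : Fin n → ℂ) :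
    (star x ⬝ᵥ (M *ᵥ x)).re ≤ eigDesc hM ⟨0, hn⟩ * (star x ⬝ᵥ x).re := by
  have h := ((eigDesc_zero_le_iff_posSemidef hn hM).mp le_rfl).re_dotProduct_nonneg x
  simp only [sub_mulVec, smul_mulVec, one_mulVec, dotProduct_sub, dotProduct_smul] at h
  simpa [sub_nonneg] using h

lemma le_eigDesc_zero_of_dotProduct_mulVec_eq (hn : 0 < n) (hM : M.IsHermitian)
    {x : Fin n → ℂ} (hx : x ≠ 0) {r : ℝ} (h : star x ⬝ᵥ (M *ᵥ x) = r * (star x ⬝ᵥ x)) :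
    r ≤ eigDesc hM ⟨0, hn⟩ := by
  have hpos : 0 < (star x ⬝ᵥ x).re := RCLike.pos_iff.mp (dotProduct_star_self_pos_iff.mpr hx) |>.1
  have hle := re_dotProduct_mulVec_le_eigDesc_zero hn hM x
  rw [h, Complex.re_ofReal_mul] at hle
  exact le_of_mul_le_mul_right hle hpos

end eigDesc

section singVal

variable {n : ℕ} {B : Matrix (Fin n) (Fin n) ℂ}

lemma one_le_singVal_zero_of_mulVec_eq_self (hn : 0 < n) {x : Fin n → ℂ} (hx : x ≠ 0)
    (hBx : B *ᵥ x = x) : 1 ≤ singVal B ⟨0, hn⟩ := by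
  have h : star x ⬝ᵥ ((Bᴴ * B) *ᵥ x) = ((1 : ℝ) : ℂ) * (star x ⬝ᵥ x) := by
    rw [← mulVec_mulVec, dotProduct_mulVec, ← star_mulVec, hBx, Complex.ofReal_one, one_mul]
  rw [singVal, Real.one_le_sqrt]
  exact le_eigDesc_zero_of_dotProduct_mulVec_eq hn _ hx h

lemma singVal_zero_le_one_of_posSemidef (hn : 0 < n) (hB : (1 - Bᴴ * B).PosSemidef) :
    singVal B ⟨0, hn⟩ ≤ 1 := by
  rw [singVal, Real.sqrt_le_one, eigDesc_zero_le_iff_posSemidef, Complex.ofReal_one, one_smul]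
  exact hB

lemma Matrix.IsHermitian.eigDesc_zero_le_singVal_zero (hn : 0 < n) (hB : B.IsHermitian) :
    eigDesc hB ⟨0, hn⟩ ≤ singVal B ⟨0, hn⟩ := by
  obtain ⟨i, hi⟩ := exists_eigenvalues_eq_eigDesc hB ⟨0, hn⟩
  set v : Fin n → ℂ := ⇑(hB.eigenvectorBasis i)
  have hv : v ≠ 0 := fun h ↦
    hB.eigenvectorBasis.orthonormal.ne_zero i (by ext j; exact congrFun h j)
  have hBv : B *ᵥ v = hB.eigenvalues i • v := hB.mulVec_eigenvectorBasis i
  have h : star v ⬝ᵥ ((Bᴴ * B) *ᵥ v) = ((hB.eigenvalues i ^ 2 : ℝ) : ℂ) * (star v ⬝ᵥ v) := by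
    rw [← mulVec_mulVec, hBv, mulVec_smul, hB.eq, hBv, smul_smul, dotProduct_smul, ← pow_two,
      Complex.real_smul]
  rw [hi, singVal]
  exact (le_abs_self _).trans (Real.abs_le_sqrt (le_eigDesc_zero_of_dotProduct_mulVec_eq hn _ hv h))

end singVal

section psdSqrt

variable {n : ℕ} {M : Matrix (Fin n) (Fin n) ℂ}

lemma psdSqrt_eq_conjStarAlgAut (hM : M.PosSemidef) :
    psdSqrt hM = Unitary.conjStarAlgAut ℂ _ hM.1.eigenvectorUnitary
      (diagonal ((↑) ∘ (√·) ∘ hM.1.eigenvalues)) :=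
  rfl

lemma posSemidef_psdSqrt (hM : M.PosSemidef) : (psdSqrt hM).PosSemidef := by
  rw [psdSqrt_eq_conjStarAlgAut, Unitary.conjStarAlgAut_apply,
    Unitary.isUnit_coe.posSemidef_star_right_conjugate_iff, posSemidef_diagonal_iff]
  exact fun i ↦ Complex.zero_le_real.mpr (Real.sqrt_nonneg _)

lemma psdSqrt_mul_self (hM : M.PosSemidef) : psdSqrt hM * psdSqrt hM = M := by
  rw [psdSqrt_eq_conjStarAlgAut, ← map_mul, diagonal_mul_diagonal]
  conv_rhs => rw [hM.1.spectral_theorem]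
  congr 2
  funext i
  simp [← Complex.ofReal_mul, Real.mul_self_sqrt (hM.eigenvalues_nonneg i)]

lemma det_psdSqrt_eq_zero (hM : M.PosSemidef) (h : M.det = 0) : (psdSqrt hM).det = 0 :=
  mul_self_eq_zero.mp <| by rw [← det_mul, psdSqrt_mul_self, h]

end psdSqrt

lemma Matrix.nonsing_inv_mulVec_of_mulVec_eq_self {ι R : Type*} [Fintype ι] [DecidableEq ι]
    [CommRing R] {M : Matrix ι ι R} (hM : IsUnit M.det) {x : ι → R} (hx : M *ᵥ x = x) :
    M⁻¹ *ᵥ x = x := by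
  conv_lhs => rw [← hx, mulVec_mulVec, nonsing_inv_mul M hM, one_mulVec]

lemma Matrix.PosSemidef.isUnit_det_one_add {ι 𝕜 : Type*} [Fintype ι] [DecidableEq ι] [RCLike 𝕜]
    {S : Matrix ι ι 𝕜} (hS : S.PosSemidef) : IsUnit (1 + S).det :=
  (PosDef.one.add_posSemidef hS).det_pos.ne'.isUnit

section contraction

variable {n : ℕ}

lemma isUnit_det_one_sub_of_singVal_lt_one (hn : 0 < n) {A : Matrix (Fin n) (Fin n) ℂ}
    (hA : singVal A ⟨0, hn⟩ < 1) : IsUnit (1 - A).det := by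
  rw [isUnit_iff_ne_zero]
  intro hdet
  obtain ⟨y, hy, hAy⟩ := exists_mulVec_eq_zero_iff.mpr hdet
  rw [sub_mulVec, one_mulVec, sub_eq_zero] at hAy
  exact hA.not_ge (one_le_singVal_zero_of_mulVec_eq_self hn hy hAy.symm)

lemma dotProduct_hermPart_mulVec_of_mulVec_eq_self {X : Matrix (Fin n) (Fin n) ℂ}
    {x : Fin n → ℂ} (hx : X *ᵥ x = x) : star x ⬝ᵥ (hermPart X *ᵥ x) = star x ⬝ᵥ x := by
  have hXH : star x ⬝ᵥ (Xᴴ *ᵥ x) = star x ⬝ᵥ x := by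
    rw [dotProduct_mulVec, ← star_mulVec, hx]
  rw [hermPart, smul_mulVec, add_mulVec, dotProduct_smul, dotProduct_add, hx, hXH]
  simp only [smul_eq_mul]
  ring

lemma posSemidef_one_sub_conjTranspose_mul_inv_one_add {S : Matrix (Fin n) (Fin n) ℂ}
    (hS : S.PosSemidef) : (1 - ((1 + S)⁻¹)ᴴ * (1 + S)⁻¹).PosSemidef := by
  have hunit := hS.isUnit_det_one_add
  have hSS : (S * S).PosSemidef := by
    simpa only [hS.isHermitian.eq] using posSemidef_conjTranspose_mul_self S
  have h : 1 - ((1 + S)⁻¹)ᴴ * (1 + S)⁻¹ = ((1 + S)⁻¹)ᴴ * (S + S + S * S) * (1 + S)⁻¹ := by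
    have hH : ((1 + S)⁻¹)ᴴ = (1 + S)⁻¹ := by
      rw [conjTranspose_nonsing_inv, conjTranspose_add, conjTranspose_one, hS.isHermitian.eq]
    have e : S + S + S * S = (1 + S) * (1 + S) - 1 := by noncomm_ring
    rw [e, hH, Matrix.mul_sub, Matrix.sub_mul, ← Matrix.mul_assoc, nonsing_inv_mul _ hunit,
      Matrix.one_mul, mul_nonsing_inv _ hunit, Matrix.mul_one]
  rw [h]
  exact ((hS.add hS).add hSS).conjTranspose_mul_mul_same _

lemma singVal_inv_one_add_zero_eq_one (hn : 0 < n) {S : Matrix (Fin n) (Fin n) ℂ}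
    (hS : S.PosSemidef) (hdet : S.det = 0) : singVal (1 + S)⁻¹ ⟨0, hn⟩ = 1 := by
  obtain ⟨y, hy, hSy⟩ := exists_mulVec_eq_zero_iff.mpr hdet
  have hfix : (1 + S)⁻¹ *ᵥ y = y :=
    nonsing_inv_mulVec_of_mulVec_eq_self hS.isUnit_det_one_add
      (by rw [add_mulVec, one_mulVec, hSy, add_zero])
  exact le_antisymm
    (singVal_zero_le_one_of_posSemidef hn (posSemidef_one_sub_conjTranspose_mul_inv_one_add hS))
    (one_le_singVal_zero_of_mulVec_eq_self hn hy hfix)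

end contraction

theorem stmt16 {n : ℕ} (hn : 0 < n) (A : Matrix (Fin n) (Fin n) ℂ) (hA : ∀ j, singVal A j < 1)
    (hdet : A.det = 0) :
    1 ≤ eigDesc (hermPart_isHermitian (1 - A)⁻¹) ⟨0, hn⟩ ∧
      singVal ((1 + psdSqrt (Matrix.posSemidef_conjTranspose_mul_self A))⁻¹) ⟨0, hn⟩ = 1 ∧
      singVal ((1 + psdSqrt (Matrix.posSemidef_conjTranspose_mul_self A))⁻¹) ⟨0, hn⟩ ≤
        singVal (hermPart (1 - A)⁻¹) ⟨0, hn⟩ := by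
  obtain ⟨x, hx, hAx⟩ := exists_mulVec_eq_zero_iff.mpr hdet
  have hfix : (1 - A)⁻¹ *ᵥ x = x :=
    nonsing_inv_mulVec_of_mulVec_eq_self (isUnit_det_one_sub_of_singVal_lt_one hn (hA _))
      (by rw [sub_mulVec, one_mulVec, hAx, sub_zero])
  have hRe : 1 ≤ eigDesc (hermPart_isHermitian (1 - A)⁻¹) ⟨0, hn⟩ :=
    le_eigDesc_zero_of_dotProduct_mulVec_eq hn _ hx <| by
      rw [dotProduct_hermPart_mulVec_of_mulVec_eq_self hfix, Complex.ofReal_one, one_mul]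
  have habs : singVal ((1 + psdSqrt (posSemidef_conjTranspose_mul_self A))⁻¹) ⟨0, hn⟩ = 1 :=
    singVal_inv_one_add_zero_eq_one hn (posSemidef_psdSqrt _)
      (det_psdSqrt_eq_zero _ (by rw [det_mul, hdet, mul_zero]))
  refine ⟨hRe, habs, ?_⟩
  rw [habs]
  exact hRe.trans ((hermPart_isHermitian _).eigDesc_zero_le_singVal_zero hn)
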